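/- arXiv:1006.3514 — 4 statements merged into one kernel-verified Lean document; each statement's English description precedes it below -/
import Mathlib

section
/- Let d ≥ 1 and δ > 0. For all points s, q ∈ ℝ^d with x := ‖s − q‖ > 0, the mismatch probability satisfies Ψ̄(s, q) ≤ φ(δ/x). -/
open MeasureTheory ProbabilityTheory Real
open scoped ENNReal

noncomputable section

/-- Standard inner product on `Fin d → ℝ`. -/
def dotp {d : ℕ} (a x : Fin d → ℝ) : ℝ := ∑ i, a i * x i

/-- Euclidean norm on `Fin d → ℝ`. -/
def enorm' {d : ℕ} (x : Fin d → ℝ) : ℝ := Real.sqrt (∑ i, x i ^ 2)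

/-- Ternary hash index `⌊(⟨a,p⟩ + b)/δ⌋ mod 4`. -/
def hashIdx {d : ℕ} (δ : ℝ) (a : Fin d → ℝ) (b : ℝ) (p : Fin d → ℝ) : ℤ :=
  ⌊(dotp a p + b) / δ⌋ % 4

/-- `s` and `q` mismatch: one hash index is 0 (ternary symbol `0`) and the other is 2
(ternary symbol `1`). -/
def Mismatch {d : ℕ} (δ : ℝ) (a : Fin d → ℝ) (b : ℝ) (s q : Fin d → ℝ) : Prop :=
  (hashIdx δ a b s = 0 ∧ hashIdx δ a b q = 2) ∨ (hashIdx δ a b s = 2 ∧ hashIdx δ a b q = 0)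

/-- Product of `d` i.i.d. standard Gaussians: the law of `a`. -/
def gaussPi (d : ℕ) : Measure (Fin d → ℝ) := Measure.pi fun _ => gaussianReal 0 1

/-- Uniform probability measure on the interval `(0, 2δ)`: the law of `b`. -/
def unifB (δ : ℝ) : Measure ℝ :=
  (ENNReal.ofReal (2 * δ))⁻¹ • volume.restrict (Set.Ioo 0 (2 * δ))

/-- Joint law of the independent pair `(a, b)`. -/
def jointμ (d : ℕ) (δ : ℝ) : Measure ((Fin d → ℝ) × ℝ) := (gaussPi d).prod (unifB δ)

/-- Mismatch probability `Ψ̄(s,q)` over the random pair `(a, b)`. -/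
def PsiBar (d : ℕ) (δ : ℝ) (s q : Fin d → ℝ) : ℝ≥0∞ :=
  jointμ d δ {ab : (Fin d → ℝ) × ℝ | Mismatch δ ab.1 ab.2 s q}

/-- Complementary cdf `F̄` of the standard normal distribution. -/
def Fbar (y : ℝ) : ℝ := ∫ t in Set.Ioi y, (1 / Real.sqrt (2 * π)) * Real.exp (-t ^ 2 / 2)

/-- The function `φ(y) = e^{-y²/2}/(y√(2π)) - F̄(y)`. -/
def phi (y : ℝ) : ℝ := Real.exp (-y ^ 2 / 2) / (y * Real.sqrt (2 * π)) - Fbar y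

/-- One-dimensional ternary hash index `⌊(u + b)/δ⌋ mod 4`. -/
def jb (δ b u : ℝ) : ℤ := ⌊(u + b) / δ⌋ % 4

/-- One-dimensional mismatch: one index is 0 and the other is 2. -/
def Mismatch1 (δ b u v : ℝ) : Prop :=
  (jb δ b u = 0 ∧ jb δ b v = 2) ∨ (jb δ b u = 2 ∧ jb δ b v = 0)

/-- One-dimensional mismatch probability `ψ̄(u,v)` over `b` uniform on `(0, 2δ)`. -/
def psiBar (δ u v : ℝ) : ℝ≥0∞ := unifB δ {b | Mismatch1 δ b u v}

/-! For fixed `a` put `u = ⟨a,s⟩`, `v = ⟨a,q⟩` and `β = (v + b)/δ`, which runs over a window of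
length 2. A mismatch with `v ≤ u` forces `⌊β⌋` to be even and `⌊β + (u-v)/δ⌋ ≥ ⌊β⌋ + 2`, hence
`fract β ≥ 2 - (u-v)/δ`. That condition is 2-periodic in `β`, so within any window of length 2 it
holds on a set of measure at most `(u-v)/δ - 1`: the conditional mismatch probability is at most
`(|⟨a, s-q⟩|/δ - 1)⁺/2`. Since `⟨a, s-q⟩` is distributed as `x Z` with `Z` standard normal,
averaging over `a` gives `E[(|Z|/y - 1)⁺]/2` with `y = δ/x`, and this equals `φ(y)` because
`t e^{-t²/2}` integrates to `e^{-y²/2}` over `(y, ∞)`. -/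

open Set Filter Topology

def evenCellTail (θ : ℝ) : Set ℝ := {x | Even ⌊x⌋ ∧ θ ≤ Int.fract x}

lemma measurableSet_evenCellTail (θ : ℝ) : MeasurableSet (evenCellTail θ) :=
  (Int.measurable_floor (MeasurableSet.of_discrete (s := {n : ℤ | Even n}))).inter
    (measurableSet_le measurable_const measurable_fract)

lemma evenCellTail_vadd_zmultiples_two (θ : ℝ) (g : AddSubgroup.zmultiples (2 : ℝ)) :
    (fun x => g +ᵥ x) ⁻¹' evenCellTail θ = evenCellTail θ := by
  obtain ⟨_, k, rfl⟩ := g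
  ext x
  have hk : k • (2 : ℝ) = ((2 * k : ℤ) : ℝ) := by push_cast; rw [zsmul_eq_mul]; ring
  simp only [mem_preimage, AddSubgroup.vadd_def, vadd_eq_add, hk, evenCellTail, mem_ofPred_eq,
    Int.floor_intCast_add, Int.fract_intCast_add, Int.even_add, even_two_mul, true_iff]

lemma volume_evenCellTail_inter_Ioc_le (θ c : ℝ) :
    volume (evenCellTail θ ∩ Ioc c (c + 2)) ≤ ENNReal.ofReal (1 - θ) := by
  rw [(isAddFundamentalDomain_Ioc two_pos c volume).measure_set_eq
    (isAddFundamentalDomain_Ioc two_pos (-1) volume) (measurableSet_evenCellTail θ)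
    (evenCellTail_vadd_zmultiples_two θ), ← Real.volume_Ico]
  -- in the window `(-1, 1]` only the cell `[0, 1)` has even floor
  refine measure_mono ?_
  rintro x ⟨⟨⟨m, hm⟩, hθ⟩, hlo, hhi⟩
  have hfloor : ⌊x⌋ = 0 := by
    have : -1 ≤ ⌊x⌋ := Int.le_floor.2 (by push_cast; linarith)
    have : ⌊x⌋ ≤ 1 := Int.floor_le_iff.2 (by push_cast; linarith)
    omega
  rw [Int.fract, hfloor, Int.cast_zero, sub_zero] at hθ
  exact ⟨hθ, by simpa [hfloor] using Int.lt_floor_add_one x⟩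

lemma mem_evenCellTail_of_mismatch1 {δ b u v : ℝ} (hδ : 0 ≤ δ) (huv : v ≤ u)
    (h : Mismatch1 δ b u v) : (v + b) / δ ∈ evenCellTail (2 - (u - v) / δ) := by
  have hshift : (u + b) / δ = (v + b) / δ + (u - v) / δ := by ring
  simp only [Mismatch1, jb, hshift] at h
  set β := (v + b) / δ
  set r := (u - v) / δ
  have hmono : ⌊β⌋ ≤ ⌊β + r⌋ :=
    Int.floor_le_floor (le_add_of_nonneg_right (div_nonneg (sub_nonneg.2 huv) hδ))
  have hjump : ⌊β⌋ + 2 ≤ ⌊β + r⌋ := by omega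
  refine ⟨Int.even_iff.2 (by omega), ?_⟩
  have : ((⌊β⌋ + 2 : ℤ) : ℝ) ≤ β + r := Int.le_floor.1 hjump
  rw [Int.fract]
  push_cast at this
  linarith

lemma psiBar_comm (δ u v : ℝ) : psiBar δ u v = psiBar δ v u := by
  simp only [psiBar, Mismatch1, or_comm, and_comm]

lemma volume_preimage_add_div {δ : ℝ} (hδ : δ ≠ 0) (v : ℝ) (s : Set ℝ) :
    volume ((fun b => (v + b) / δ) ⁻¹' s) = ENNReal.ofReal |δ| * volume s := by
  have : (fun b => (v + b) / δ) = (δ⁻¹ * ·) ∘ (v + ·) := by ext; simp [div_eq_inv_mul]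
  rw [this, Set.preimage_comp, measure_preimage_add,
    Real.volume_preimage_mul_left (inv_ne_zero hδ), inv_inv]

lemma psiBar_le_of_le {δ u v : ℝ} (hδ : 0 < δ) (huv : v ≤ u) :
    psiBar δ u v ≤ ENNReal.ofReal (((u - v) / δ - 1) / 2) := by
  have hwindow : {b | Mismatch1 δ b u v} ∩ Ioo 0 (2 * δ) ⊆ (fun b => (v + b) / δ) ⁻¹'
      (evenCellTail (2 - (u - v) / δ) ∩ Ioc (v / δ) (v / δ + 2)) := by
    rintro b ⟨hb, hb0, hb2⟩
    refine ⟨mem_evenCellTail_of_mismatch1 hδ.le huv hb, ?_, ?_⟩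
    · exact (div_lt_div_iff_of_pos_right hδ).2 (by linarith)
    · rw [div_add' _ _ _ hδ.ne']
      exact (div_le_div_iff_of_pos_right hδ).2 (by linarith)
  calc psiBar δ u v
      = (ENNReal.ofReal (2 * δ))⁻¹ * volume ({b | Mismatch1 δ b u v} ∩ Ioo 0 (2 * δ)) := by
        rw [psiBar, unifB, Measure.smul_apply, Measure.restrict_apply' measurableSet_Ioo,
          smul_eq_mul]
    _ ≤ (ENNReal.ofReal (2 * δ))⁻¹ * (ENNReal.ofReal δ *
          volume (evenCellTail (2 - (u - v) / δ) ∩ Ioc (v / δ) (v / δ + 2))) := by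
        gcongr
        exact (measure_mono hwindow).trans_eq
          (by rw [volume_preimage_add_div hδ.ne', abs_of_pos hδ])
    _ ≤ (ENNReal.ofReal (2 * δ))⁻¹ *
          (ENNReal.ofReal δ * ENNReal.ofReal (1 - (2 - (u - v) / δ))) := by
        gcongr
        exact volume_evenCellTail_inter_Ioc_le _ _
    _ = ENNReal.ofReal (((u - v) / δ - 1) / 2) := by
        rw [← ENNReal.ofReal_mul hδ.le, ← ENNReal.ofReal_inv_of_pos (by positivity),
          ← ENNReal.ofReal_mul (by positivity)]
        congr 1
        field_simp
        ring

lemma psiBar_le {δ : ℝ} (hδ : 0 < δ) (u v : ℝ) :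
    psiBar δ u v ≤ ENNReal.ofReal ((|u - v| / δ - 1) / 2) := by
  rcases le_total v u with huv | huv
  · rw [abs_of_nonneg (sub_nonneg.2 huv)]
    exact psiBar_le_of_le hδ huv
  · rw [abs_sub_comm, abs_of_nonneg (sub_nonneg.2 huv), psiBar_comm]
    exact psiBar_le_of_le hδ huv

lemma gaussianPDFReal_zero_one (t : ℝ) :
    gaussianPDFReal 0 1 t = 1 / √(2 * π) * exp (-t ^ 2 / 2) := by
  simp [gaussianPDFReal]

lemma Fbar_eq_integral_gaussianPDFReal (y : ℝ) :
    Fbar y = ∫ t in Ioi y, gaussianPDFReal 0 1 t := by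
  simp only [Fbar, gaussianPDFReal_zero_one]

lemma tendsto_gaussianPDFReal_zero_one_atTop :
    Tendsto (gaussianPDFReal 0 1) atTop (𝓝 0) := by
  rw [funext gaussianPDFReal_zero_one, ← mul_zero (1 / √(2 * π))]
  refine (tendsto_exp_atBot.comp ?_).const_mul _
  exact (tendsto_neg_atTop_atBot.comp (tendsto_pow_atTop two_ne_zero)).atBot_div_const two_pos

lemma hasDerivAt_neg_gaussianPDFReal (t : ℝ) :
    HasDerivAt (fun t => -gaussianPDFReal 0 1 t) (t * gaussianPDFReal 0 1 t) t := by
  simp only [gaussianPDFReal_zero_one]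
  exact (((hasDerivAt_pow 2 t).fun_neg.div_const 2).exp.const_mul (1 / √(2 * π))).fun_neg
    |>.congr_deriv (by push_cast; ring)

lemma integrableOn_Ioi_mul_gaussianPDFReal {y : ℝ} (hy : 0 ≤ y) :
    IntegrableOn (fun t => t * gaussianPDFReal 0 1 t) (Ioi y) :=
  integrableOn_Ioi_deriv_of_nonneg' (fun t _ => hasDerivAt_neg_gaussianPDFReal t)
    (fun t ht => mul_nonneg (hy.trans ht.out.le) (gaussianPDFReal_nonneg 0 1 t))
    tendsto_gaussianPDFReal_zero_one_atTop.neg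

lemma integral_Ioi_mul_gaussianPDFReal {y : ℝ} (hy : 0 ≤ y) :
    ∫ t in Ioi y, t * gaussianPDFReal 0 1 t = gaussianPDFReal 0 1 y := by
  rw [integral_Ioi_of_hasDerivAt_of_nonneg' (fun t _ => hasDerivAt_neg_gaussianPDFReal t)
    (fun t ht => mul_nonneg (hy.trans ht.out.le) (gaussianPDFReal_nonneg 0 1 t))
    (tendsto_gaussianPDFReal_zero_one_atTop.neg)]
  simp

lemma integral_hinge_gaussianReal {y : ℝ} (hy : 0 < y) :
    ∫ z, max ((|z| / y - 1) / 2) 0 ∂gaussianReal 0 1 = phi y := by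
  set f : ℝ → ℝ := fun t => gaussianPDFReal 0 1 t * max ((t / y - 1) / 2) 0
  have hf_abs : ∀ z, gaussianPDFReal 0 1 z • max ((|z| / y - 1) / 2) 0 = f |z| := by
    intro z
    simp [f, gaussianPDFReal_zero_one, sq_abs]
  have hf_zero : ∀ t ∈ Ioi (0 : ℝ) \ Ioi y, f t = 0 := by
    rintro t ⟨-, ht⟩
    have : t / y ≤ 1 := (div_le_one hy).2 (not_lt.1 ht)
    simp [f, max_eq_right (by linarith : (t / y - 1) / 2 ≤ 0)]
  have hf_tail : ∀ t ∈ Ioi y,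
      f t = (t * gaussianPDFReal 0 1 t / y - gaussianPDFReal 0 1 t) / 2 := by
    intro t ht
    have : 1 < t / y := (one_lt_div hy).2 ht
    simp only [f, max_eq_left (by linarith : 0 ≤ (t / y - 1) / 2)]
    ring
  rw [integral_gaussianReal_eq_integral_smul one_ne_zero]
  simp_rw [hf_abs]
  rw [integral_comp_abs, setIntegral_eq_of_subset_of_ae_sdiff_eq_zero
    measurableSet_Ioi.nullMeasurableSet (Ioi_subset_Ioi hy.le) (ae_of_all _ hf_zero),
    setIntegral_congr_fun measurableSet_Ioi hf_tail, integral_div,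
    integral_sub ((integrableOn_Ioi_mul_gaussianPDFReal hy.le).div_const y)
      (integrable_gaussianPDFReal 0 1).integrableOn,
    integral_div, integral_Ioi_mul_gaussianPDFReal hy.le, ← Fbar_eq_integral_gaussianPDFReal, phi,
    gaussianPDFReal_zero_one]
  field_simp

lemma lintegral_hinge_gaussianReal {y : ℝ} (hy : 0 < y) :
    ∫⁻ z, ENNReal.ofReal ((|z| / y - 1) / 2) ∂gaussianReal 0 1 = ENNReal.ofReal (phi y) := by
  have hint : Integrable (fun z => max ((|z| / y - 1) / 2) 0) (gaussianReal 0 1) :=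
    (((IsGaussian.integrable_id.abs.div_const y).sub (integrable_const 1)).div_const 2).pos_part
  rw [← integral_hinge_gaussianReal hy,
    ofReal_integral_eq_lintegral_ofReal hint (ae_of_all _ fun _ => le_max_right _ _)]
  simp

lemma map_dotp_gaussPi {d : ℕ} (w : Fin d → ℝ) :
    (gaussPi d).map (fun a => dotp a w) = gaussianReal 0 (enorm' w ^ 2).toNNReal := by
  have hdotp : (fun a => dotp a w) = innerSL ℝ (WithLp.toLp 2 w) ∘ WithLp.toLp 2 := by
    ext a
    simp [dotp, PiLp.inner_apply, mul_comm]
  have hnorm : enorm' w = ‖WithLp.toLp 2 w‖ := by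
    simp [enorm', EuclideanSpace.norm_eq]
  rw [hdotp, ← Measure.map_map (by fun_prop) (by fun_prop), gaussPi, map_pi_eq_stdGaussian,
    IsGaussian.map_eq_gaussianReal, integral_strongDual_stdGaussian, variance_dual_stdGaussian,
    innerSL_apply_norm, hnorm]

lemma gaussianReal_sq_eq_map_mul (x : ℝ) :
    gaussianReal 0 (x ^ 2).toNNReal = (gaussianReal 0 1).map (x * ·) := by
  rw [gaussianReal_map_const_mul, mul_zero, mul_one]
  congr
  exact Real.toNNReal_of_nonneg (sq_nonneg x)

lemma measurable_dotp {d : ℕ} (w : Fin d → ℝ) : Measurable fun a : Fin d → ℝ => dotp a w := by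
  unfold dotp
  fun_prop

lemma dotp_sub {d : ℕ} (a s q : Fin d → ℝ) : dotp a s - dotp a q = dotp a (s - q) := by
  simp only [dotp, Pi.sub_apply, mul_sub, Finset.sum_sub_distrib]

lemma measurable_hashIdx {d : ℕ} (δ : ℝ) (p : Fin d → ℝ) :
    Measurable fun ab : (Fin d → ℝ) × ℝ => hashIdx δ ab.1 ab.2 p :=
  (measurable_from_top (f := (· % 4 : ℤ → ℤ))).comp <| Int.measurable_floor.comp <|
    (((measurable_dotp p).comp measurable_fst).add measurable_snd).div_const δ

lemma measurableSet_mismatch {d : ℕ} (δ : ℝ) (s q : Fin d → ℝ) :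
    MeasurableSet {ab : (Fin d → ℝ) × ℝ | Mismatch δ ab.1 ab.2 s q} :=
  (measurable_hashIdx δ s).prodMk (measurable_hashIdx δ q)
    (MeasurableSet.of_discrete (s := {j : ℤ × ℤ | (j.1 = 0 ∧ j.2 = 2) ∨ (j.1 = 2 ∧ j.2 = 0)}))

instance sFinite_unifB (δ : ℝ) : SFinite (unifB δ) := by
  unfold unifB
  infer_instance

lemma PsiBar_eq_lintegral_psiBar (d : ℕ) (δ : ℝ) (s q : Fin d → ℝ) :
    PsiBar d δ s q = ∫⁻ a, psiBar δ (dotp a s) (dotp a q) ∂gaussPi d :=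
  Measure.prod_apply (measurableSet_mismatch δ s q)

theorem psiBar_le_phi_general (d : ℕ) (δ : ℝ) (hδ : 0 < δ) (s q : Fin d → ℝ)
    (hx : 0 < enorm' (s - q)) :
    PsiBar d δ s q ≤ ENNReal.ofReal (phi (δ / enorm' (s - q))) := by
  set x := enorm' (s - q)
  have hhinge : Measurable fun t : ℝ => ENNReal.ofReal ((|t| / δ - 1) / 2) := by fun_prop
  calc PsiBar d δ s q = ∫⁻ a, psiBar δ (dotp a s) (dotp a q) ∂gaussPi d :=
        PsiBar_eq_lintegral_psiBar d δ s q
    _ ≤ ∫⁻ a, ENNReal.ofReal ((|dotp a (s - q)| / δ - 1) / 2) ∂gaussPi d :=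
        lintegral_mono fun a => by rw [← dotp_sub]; exact psiBar_le hδ _ _
    _ = ∫⁻ t, ENNReal.ofReal ((|t| / δ - 1) / 2) ∂gaussianReal 0 (x ^ 2).toNNReal := by
        rw [← map_dotp_gaussPi, lintegral_map hhinge (measurable_dotp _)]
    _ = ∫⁻ z, ENNReal.ofReal ((|z| / (δ / x) - 1) / 2) ∂gaussianReal 0 1 := by
        rw [gaussianReal_sq_eq_map_mul, lintegral_map hhinge (measurable_const_mul x)]
        simp only [abs_mul, abs_of_pos hx, div_div_eq_mul_div, mul_comm x]
    _ = ENNReal.ofReal (phi (δ / x)) := lintegral_hinge_gaussianReal (div_pos hδ hx)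

/-- `Ψ̄(s,q) ≤ φ(δ/x)` where `x = ‖s - q‖ > 0`. -/
theorem psiBar_le_phi (d : ℕ) (hd : 1 ≤ d) (δ : ℝ) (hδ : 0 < δ) (s q : Fin d → ℝ)
    (hx : 0 < enorm' (s - q)) :
    PsiBar d δ s q ≤ ENNReal.ofReal (phi (δ / enorm' (s - q))) :=
  psiBar_le_phi_general d δ hδ s q hx

end
end

section
/- For every y ≥ 2, φ(y) − φ(2y) ≥ (1/(5√(2π))) · e^{−y²/2}/y³. -/
open MeasureTheory ProbabilityTheory Real
open scoped ENNReal

noncomputable section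

/-! The derivative of `-e^{-t²/2}/t^{n+1}` is `e^{-t²/2} (t^{-n} + (n+1) t^{-n-2})`.
For `n = 0` this gives `φ(a) - φ(b) = (2π)^{-1/2} ∫_a^b e^{-t²/2}/t² dt`. For `n = 2`, together with
`t^{-4} ≤ t^{-2}/4` on `t ≥ 2`, it bounds `∫_y^{2y} e^{-t²/2}/t² dt` below by
`(4/7)(e^{-y²/2}/y³ - e^{-2y²}/(8y³)) ≥ e^{-y²/2}/(2y³)`. -/

theorem hasDerivAt_exp_neg_sq_div_two (t : ℝ) :
    HasDerivAt (fun t : ℝ => exp (-t ^ 2 / 2)) (-t * exp (-t ^ 2 / 2)) t := by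
  have h : HasDerivAt (fun t : ℝ => -t ^ 2 / 2) (-t) t := by
    refine ((hasDerivAt_pow 2 t).fun_neg.div_const 2).congr_deriv ?_
    push_cast
    ring
  simpa [mul_comm] using h.exp

theorem hasDerivAt_neg_exp_neg_sq_div_two_div_pow (n : ℕ) {t : ℝ} (ht : t ≠ 0) :
    HasDerivAt (fun t : ℝ => -(exp (-t ^ 2 / 2) / t ^ (n + 1)))
      (exp (-t ^ 2 / 2) / t ^ n + (n + 1) * (exp (-t ^ 2 / 2) / t ^ (n + 2))) t := by
  refine ((hasDerivAt_exp_neg_sq_div_two t).fun_div (hasDerivAt_pow (n + 1) t)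
    (pow_ne_zero _ ht)).fun_neg.congr_deriv ?_
  rw [Nat.add_sub_cancel]
  push_cast
  field_simp
  ring

theorem intervalIntegrable_exp_neg_sq_div_two_div_pow (n : ℕ) {a b : ℝ} (ha : 0 < a) (hb : 0 < b) :
    IntervalIntegrable (fun t : ℝ => exp (-t ^ 2 / 2) / t ^ n) volume a b := by
  refine ContinuousOn.intervalIntegrable fun t ht => ?_
  have ht : 0 < t := lt_of_lt_of_le (lt_min ha hb) ht.1
  fun_prop (disch := positivity)

theorem integral_exp_neg_sq_div_two_div_pow_add (n : ℕ) {a b : ℝ} (ha : 0 < a) (hb : 0 < b) :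
    (∫ t in a..b, exp (-t ^ 2 / 2) / t ^ n) + (n + 1) * ∫ t in a..b, exp (-t ^ 2 / 2) / t ^ (n + 2)
      = exp (-a ^ 2 / 2) / a ^ (n + 1) - exp (-b ^ 2 / 2) / b ^ (n + 1) := by
  have integrable (k : ℕ) := intervalIntegrable_exp_neg_sq_div_two_div_pow k ha hb
  rw [← intervalIntegral.integral_const_mul, ← intervalIntegral.integral_add (integrable n)
    ((integrable (n + 2)).const_mul _), intervalIntegral.integral_eq_sub_of_hasDerivAt
    (fun t ht => hasDerivAt_neg_exp_neg_sq_div_two_div_pow n ?_)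
    ((integrable n).add ((integrable (n + 2)).const_mul _))]
  · ring
  · exact (lt_of_lt_of_le (lt_min ha hb) ht.1).ne'

theorem integrable_gaussian_density :
    Integrable fun t : ℝ => 1 / √(2 * π) * exp (-t ^ 2 / 2) := by
  convert (integrable_exp_neg_mul_sq (one_half_pos (α := ℝ))).const_mul (1 / √(2 * π)) using 4
  ring

theorem Fbar_sub_Fbar (a b : ℝ) :
    Fbar a - Fbar b = ∫ t in a..b, 1 / √(2 * π) * exp (-t ^ 2 / 2) :=
  intervalIntegral.integral_Ioi_sub_Ioi' integrable_gaussian_density.integrableOn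
    integrable_gaussian_density.integrableOn

theorem phi_sub_phi {a b : ℝ} (ha : 0 < a) (hb : 0 < b) :
    phi a - phi b = 1 / √(2 * π) * ∫ t in a..b, exp (-t ^ 2 / 2) / t ^ 2 := by
  have parts := integral_exp_neg_sq_div_two_div_pow_add 0 ha hb
  simp only [pow_zero, div_one, zero_add, pow_one, CharP.cast_eq_zero, one_mul] at parts
  rw [phi, phi, sub_sub_sub_comm, Fbar_sub_Fbar, intervalIntegral.integral_const_mul,
    eq_sub_of_add_eq' parts]
  have hs : √(2 * π) ≠ 0 := by positivity
  field_simp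

theorem integral_exp_neg_sq_div_two_div_pow_four_le {a b : ℝ} (ha : 2 ≤ a) (hab : a ≤ b) :
    ∫ t in a..b, exp (-t ^ 2 / 2) / t ^ 4 ≤ 1 / 4 * ∫ t in a..b, exp (-t ^ 2 / 2) / t ^ 2 := by
  have integrable (k : ℕ) := intervalIntegrable_exp_neg_sq_div_two_div_pow k
    (by linarith : (0 : ℝ) < a) (by linarith : (0 : ℝ) < b)
  rw [← intervalIntegral.integral_const_mul]
  refine intervalIntegral.integral_mono_on hab (integrable 4) ((integrable 2).const_mul _)
    fun t ht => ?_
  have h4 : 4 ≤ t ^ 2 := by nlinarith [ht.1]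
  calc exp (-t ^ 2 / 2) / t ^ 4 = exp (-t ^ 2 / 2) / t ^ 2 / t ^ 2 := by ring
    _ ≤ exp (-t ^ 2 / 2) / t ^ 2 / 4 := by gcongr
    _ = _ := by ring

/-- for `y ≥ 2`, `φ(y) - φ(2y) ≥ (1/(5√(2π))) e^{-y²/2}/y³`. -/
theorem phi_sub_phi_lower_bound (y : ℝ) (hy : 2 ≤ y) :
    1 / (5 * Real.sqrt (2 * π)) * (Real.exp (-y ^ 2 / 2) / y ^ 3) ≤ phi y - phi (2 * y) := by
  have hy0 : 0 < y := by linarith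
  have parts := integral_exp_neg_sq_div_two_div_pow_add 2 hy0 (by linarith : 0 < 2 * y)
  have tail := integral_exp_neg_sq_div_two_div_pow_four_le hy (by linarith : y ≤ 2 * y)
  have decay : exp (-(2 * y) ^ 2 / 2) / (2 * y) ^ 3 ≤ exp (-y ^ 2 / 2) / y ^ 3 / 8 := by
    rw [div_div, show (2 * y) ^ 3 = y ^ 3 * 8 by ring]
    gcongr
    nlinarith
  have main_term : exp (-y ^ 2 / 2) / y ^ 3 / 2 ≤ ∫ t in y..2 * y, exp (-t ^ 2 / 2) / t ^ 2 := by
    push_cast at parts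
    linarith
  rw [phi_sub_phi hy0 (by linarith)]
  calc 1 / (5 * √(2 * π)) * (exp (-y ^ 2 / 2) / y ^ 3)
      = 1 / √(2 * π) * (exp (-y ^ 2 / 2) / y ^ 3 / 5) := by ring
    _ ≤ 1 / √(2 * π) * ∫ t in y..2 * y, exp (-t ^ 2 / 2) / t ^ 2 := by
      gcongr
      linarith [show 0 ≤ exp (-y ^ 2 / 2) / y ^ 3 by positivity]

end
end

section
/- For every y ≥ 2, φ(y) − φ(2y) ≥ (1/4 − (1/8) e^{−3y²/2}) · (1/(y³√(2π))) · e^{−y²/2}. -/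
open MeasureTheory ProbabilityTheory Real
open scoped ENNReal

noncomputable section

/-! Write `G(y) = ∫_y^∞ e^{-t²/2} dt`, so that `√(2π) φ(y) = e^{-y²/2}/y - G(y)`. With
`A_c(t) = (1/t - 1/t³ + c/t⁵) e^{-t²/2}` one computes `-A_c' = (1 + (c-3)/t⁴ + 5c/t⁶) e^{-t²/2}`,
which dominates `e^{-t²/2}` for `c = 3` and is dominated by it for `c = 0`; integrating from `y`
gives `A_0(y) ≤ G(y) ≤ A_3(y)`. Hence `√(2π) φ(y) ≥ (1/y³ - 3/y⁵) e^{-y²/2}` and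
`√(2π) φ(2y) ≤ e^{-2y²}/(8y³)`, and for `y ≥ 2` the term `3/y⁵` is at most `3/(4y³)`. -/

open Filter Set Topology

def gaussTail (y : ℝ) : ℝ := ∫ t in Ioi y, exp (-t ^ 2 / 2)

lemma phi_eq_gaussTail (y : ℝ) :
    phi y = (exp (-y ^ 2 / 2) / y - gaussTail y) / √(2 * π) := by
  rw [phi, Fbar, gaussTail, integral_const_mul]
  ring

lemma integrableOn_exp_neg_sq_div_two (y : ℝ) :
    IntegrableOn (fun t : ℝ => exp (-t ^ 2 / 2)) (Ioi y) := by
  have h := integrable_exp_neg_mul_sq (by norm_num : (0 : ℝ) < 1 / 2)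
  refine (h.congr (Eventually.of_forall fun t => ?_)).integrableOn
  simp only
  ring_nf

lemma tendsto_exp_neg_sq_div_two_atTop :
    Tendsto (fun t : ℝ => exp (-t ^ 2 / 2)) atTop (𝓝 0) := by
  refine tendsto_exp_atBot.comp ?_
  convert tendsto_neg_atTop_atBot.comp
    ((tendsto_pow_atTop two_ne_zero).atTop_div_const (two_pos : (0 : ℝ) < 2)) using 2
  simp [neg_div]

def tailApprox (c t : ℝ) : ℝ := (1 / t - 1 / t ^ 3 + c / t ^ 5) * exp (-t ^ 2 / 2)

lemma hasDerivAt_tailApprox (c : ℝ) {t : ℝ} (ht : t ≠ 0) :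
    HasDerivAt (tailApprox c)
      (-((1 + (c - 3) / t ^ 4 + 5 * c / t ^ 6) * exp (-t ^ 2 / 2))) t := by
  have hpoly : HasDerivAt (fun t : ℝ => 1 / t - 1 / t ^ 3 + c / t ^ 5)
      (-1 / t ^ 2 + 3 / t ^ 4 - 5 * c / t ^ 6) t := by
    refine ((((hasDerivAt_const t 1).div (hasDerivAt_id' t) ht).fun_sub
      ((hasDerivAt_const t 1).div (hasDerivAt_pow 3 t) (pow_ne_zero 3 ht))).fun_add
      ((hasDerivAt_const t c).div (hasDerivAt_pow 5 t) (pow_ne_zero 5 ht))).congr_deriv ?_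
    field_simp
    ring
  have hexp : HasDerivAt (fun t : ℝ => exp (-t ^ 2 / 2)) (-t * exp (-t ^ 2 / 2)) t := by
    convert ((hasDerivAt_pow 2 t).fun_neg.div_const 2).exp using 1
    ring
  refine (hpoly.fun_mul hexp).congr_deriv ?_
  field_simp
  ring

lemma tendsto_tailApprox_atTop (c : ℝ) : Tendsto (tailApprox c) atTop (𝓝 0) := by
  have hinv (n : ℕ) (a : ℝ) (hn : n ≠ 0) : Tendsto (fun t : ℝ => a / t ^ n) atTop (𝓝 0) :=
    tendsto_const_nhds.div_atTop (tendsto_pow_atTop hn)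
  have hpoly := ((hinv 1 1 one_ne_zero).sub (hinv 3 1 three_ne_zero)).add (hinv 5 c (by norm_num))
  convert hpoly.mul tendsto_exp_neg_sq_div_two_atTop using 2 <;> simp [tailApprox]

lemma setIntegral_Ioi_le_of_hasDerivAt {f F F' : ℝ → ℝ} {a l : ℝ}
    (hF : ∀ t ∈ Ici a, HasDerivAt F (F' t) t) (hF'_nonneg : ∀ t ∈ Ioi a, 0 ≤ F' t)
    (hlim : Tendsto F atTop (𝓝 l)) (hf : IntegrableOn f (Ioi a))
    (hle : ∀ t ∈ Ioi a, f t ≤ F' t) :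
    ∫ t in Ioi a, f t ≤ l - F a := by
  rw [← integral_Ioi_of_hasDerivAt_of_nonneg' hF hF'_nonneg hlim]
  exact setIntegral_mono_on hf (integrableOn_Ioi_deriv_of_nonneg' hF hF'_nonneg hlim)
    measurableSet_Ioi hle

lemma le_setIntegral_Ioi_of_hasDerivAt {f F F' : ℝ → ℝ} {a l : ℝ}
    (hF : ∀ t ∈ Ici a, HasDerivAt F (F' t) t) (hF'_nonneg : ∀ t ∈ Ioi a, 0 ≤ F' t)
    (hlim : Tendsto F atTop (𝓝 l)) (hf : IntegrableOn f (Ioi a))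
    (hle : ∀ t ∈ Ioi a, F' t ≤ f t) :
    l - F a ≤ ∫ t in Ioi a, f t := by
  rw [← integral_Ioi_of_hasDerivAt_of_nonneg' hF hF'_nonneg hlim]
  exact setIntegral_mono_on (integrableOn_Ioi_deriv_of_nonneg' hF hF'_nonneg hlim) hf
    measurableSet_Ioi hle

lemma gaussTail_le_tailApprox_three {y : ℝ} (hy : 0 < y) : gaussTail y ≤ tailApprox 3 y := by
  have h := setIntegral_Ioi_le_of_hasDerivAt (l := 0)
    (F' := fun t => (1 + 15 / t ^ 6) * exp (-t ^ 2 / 2))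
    (fun t ht => (hasDerivAt_tailApprox 3 (hy.trans_le ht).ne').fun_neg.congr_deriv (by ring))
    (fun t ht => by have := hy.trans ht; positivity)
    (by simpa using (tendsto_tailApprox_atTop 3).neg) (integrableOn_exp_neg_sq_div_two y)
    (fun t ht => le_mul_of_one_le_left (exp_pos _).le
      (le_add_of_nonneg_right (by have := hy.trans ht; positivity)))
  simpa [gaussTail] using h

lemma tailApprox_zero_le_gaussTail {y : ℝ} (hy : 0 < y) (hy4 : 3 ≤ y ^ 4) :
    tailApprox 0 y ≤ gaussTail y := by
  have hweight {t : ℝ} (ht : t ∈ Ioi y) : 0 ≤ 1 - 3 / t ^ 4 := by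
    have ht4 : y ^ 4 ≤ t ^ 4 := pow_le_pow_left₀ hy.le (le_of_lt ht) 4
    rw [sub_nonneg, div_le_one (by linarith)]
    linarith
  have h := le_setIntegral_Ioi_of_hasDerivAt (l := 0)
    (F' := fun t => (1 - 3 / t ^ 4) * exp (-t ^ 2 / 2))
    (fun t ht => (hasDerivAt_tailApprox 0 (hy.trans_le ht).ne').fun_neg.congr_deriv (by ring))
    (fun t ht => mul_nonneg (hweight ht) (exp_pos _).le)
    (by simpa using (tendsto_tailApprox_atTop 0).neg) (integrableOn_exp_neg_sq_div_two y)
    (fun t ht => mul_le_of_le_one_left (exp_pos _).le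
      (sub_le_self _ (by have := hy.trans ht; positivity)))
  simpa [gaussTail] using h

lemma le_phi {y : ℝ} (hy : 0 < y) :
    (1 / y ^ 3 - 3 / y ^ 5) * exp (-y ^ 2 / 2) / √(2 * π) ≤ phi y :=
  calc (1 / y ^ 3 - 3 / y ^ 5) * exp (-y ^ 2 / 2) / √(2 * π)
      = (exp (-y ^ 2 / 2) / y - tailApprox 3 y) / √(2 * π) := by rw [tailApprox]; ring
    _ ≤ (exp (-y ^ 2 / 2) / y - gaussTail y) / √(2 * π) := by
      gcongr; exact gaussTail_le_tailApprox_three hy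
    _ = phi y := (phi_eq_gaussTail y).symm

lemma phi_le {y : ℝ} (hy : 0 < y) (hy4 : 3 ≤ y ^ 4) :
    phi y ≤ exp (-y ^ 2 / 2) / (y ^ 3 * √(2 * π)) :=
  calc phi y = (exp (-y ^ 2 / 2) / y - gaussTail y) / √(2 * π) := phi_eq_gaussTail y
    _ ≤ (exp (-y ^ 2 / 2) / y - tailApprox 0 y) / √(2 * π) := by
      gcongr; exact tailApprox_zero_le_gaussTail hy hy4
    _ = exp (-y ^ 2 / 2) / (y ^ 3 * √(2 * π)) := by rw [tailApprox]; ring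

/-- for `y ≥ 2`,
`φ(y) - φ(2y) ≥ (1/4 - (1/8) e^{-3y²/2}) (1/(y³√(2π))) e^{-y²/2}`. -/
theorem phi_sub_phi_lower_bound' (y : ℝ) (hy : 2 ≤ y) :
    (1 / 4 - 1 / 8 * Real.exp (-(3 * y ^ 2) / 2)) * (1 / (y ^ 3 * Real.sqrt (2 * π)))
        * Real.exp (-y ^ 2 / 2) ≤ phi y - phi (2 * y) := by
  have hy0 : 0 < y := by linarith
  set E := exp (-y ^ 2 / 2)
  set D := exp (-(3 * y ^ 2) / 2)
  have hphi_y := le_phi hy0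
  have hphi_2y := phi_le (by positivity : 0 < 2 * y)
    (le_trans (by norm_num) (pow_le_pow_left₀ zero_le_two (by linarith : (2 : ℝ) ≤ 2 * y) 4))
  have hsplit : exp (-(2 * y) ^ 2 / 2) = D * E := by rw [← exp_add]; ring_nf
  rw [hsplit] at hphi_2y
  have hgap : 0 ≤ 3 * (y ^ 2 - 4) * E / (4 * y ^ 5 * √(2 * π)) := by
    have : 0 ≤ y ^ 2 - 4 := by nlinarith
    positivity
  have hdiff : (1 / y ^ 3 - 3 / y ^ 5) * E / √(2 * π) - D * E / ((2 * y) ^ 3 * √(2 * π))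
      - (1 / 4 - 1 / 8 * D) * (1 / (y ^ 3 * √(2 * π))) * E
      = 3 * (y ^ 2 - 4) * E / (4 * y ^ 5 * √(2 * π)) := by
    field_simp
    ring
  linarith

end
end

section
/- Let δ > 0 and let u, v ∈ ℝ with δ < |u − v| < 2δ. Then the probability over b uniform on (0, 2δ) that u and v mismatch equals (|u − v| − δ)/(2δ), i.e. ψ̄(u, v) = (|u − v| − δ)/(2δ). -/
open MeasureTheory ProbabilityTheory Real
open scoped ENNReal

noncomputable section

/-!
Shifting `b` by `2δ` adds `2` to both hash indices mod 4, so the mismatch set is `2δ`-periodic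
and its measure in `(0, 2δ]` equals its measure in any window of length `2δ`. For `u ≤ v` take the
window where `u + b ∈ (0, 2δ]`: there `⌊(u + b)/δ⌋ ∈ {0, 1, 2}` and `⌊(v + b)/δ⌋ ∈ {1, 2, 3}`, so a
mismatch means `u + b < δ` and `2δ ≤ v + b`, an interval of `b` of length `|u - v| - δ`.
-/

open Set

theorem volume_inter_Ioc_eq_of_periodic {S : Set ℝ} {T : ℝ} (hT : 0 < T) (hS : MeasurableSet S)
    (hper : Function.Periodic (· ∈ S) T) (a c : ℝ) :
    volume (S ∩ Ioc a (a + T)) = volume (S ∩ Ioc c (c + T)) := by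
  have : Fact (0 < T) := ⟨hT⟩
  -- `S` is the preimage of a set in `AddCircle T`, whose measure every window of length `T` computes.
  let U : Set (AddCircle T) := {x | hper.lift x}
  have hU : MeasurableSet U := measurableSet_quotient.2 hS
  change volume (QuotientAddGroup.mk ⁻¹' U ∩ _) = volume (QuotientAddGroup.mk ⁻¹' U ∩ _)
  rw [← AddCircle.add_projection_respects_measure T a hU,
    AddCircle.add_projection_respects_measure T c hU]

theorem unifB_apply {δ : ℝ} {S : Set ℝ} (hS : MeasurableSet S) :
    unifB δ S = (ENNReal.ofReal (2 * δ))⁻¹ * volume (S ∩ Ioc 0 (2 * δ)) := by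
  rw [unifB, Measure.smul_apply, smul_eq_mul, Measure.restrict_congr_set Ioo_ae_eq_Ioc,
    Measure.restrict_apply hS]

theorem le_floor_div_iff {δ : ℝ} (hδ : 0 < δ) (x : ℝ) (k : ℤ) : k ≤ ⌊x / δ⌋ ↔ k * δ ≤ x := by
  rw [Int.le_floor, le_div_iff₀ hδ]

theorem measurable_jb (δ u : ℝ) : Measurable fun b => jb δ b u :=
  (Measurable.of_discrete (f := fun n : ℤ => n % 4)).comp
    ((measurable_const.add measurable_id).div_const δ).floor

theorem measurableSet_mismatch1 (δ u v : ℝ) : MeasurableSet {b | Mismatch1 δ b u v} := by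
  have h (w : ℝ) (k : ℤ) : MeasurableSet {b | jb δ b w = k} :=
    measurable_jb δ w (measurableSet_singleton k)
  exact ((h u 0).inter (h v 2)).union ((h u 2).inter (h v 0))

theorem mismatch1_comm {δ b u v : ℝ} : Mismatch1 δ b u v ↔ Mismatch1 δ b v u := by
  unfold Mismatch1
  tauto

theorem jb_add_two_mul {δ : ℝ} (hδ : δ ≠ 0) (b w : ℝ) :
    jb δ (b + 2 * δ) w = (⌊(w + b) / δ⌋ + 2) % 4 := by
  have : (w + (b + 2 * δ)) / δ = (w + b) / δ + (2 : ℤ) := by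
    push_cast
    field_simp
    ring
  rw [jb, this, Int.floor_add_intCast]

theorem mismatch1_periodic {δ : ℝ} (hδ : δ ≠ 0) (u v : ℝ) :
    Function.Periodic (· ∈ {b | Mismatch1 δ b u v}) (2 * δ) := by
  intro b
  simp only [mem_ofPred_eq, Mismatch1, jb_add_two_mul hδ]
  unfold jb
  generalize ⌊(u + b) / δ⌋ = m
  generalize ⌊(v + b) / δ⌋ = n
  apply propext
  omega

theorem mismatch1_add_iff {δ t b u : ℝ} (hδ : 0 < δ) (ht₁ : δ < t) (ht₂ : t < 2 * δ)
    (hb₀ : 0 < u + b) (hb₁ : u + b ≤ 2 * δ) :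
    Mismatch1 δ b u (u + t) ↔ u + b < δ ∧ 2 * δ ≤ u + t + b := by
  have key := le_floor_div_iff hδ
  have hn₀ : 0 ≤ ⌊(u + b) / δ⌋ := (key _ 0).2 (by push_cast; linarith)
  have hn₃ : ¬ 3 ≤ ⌊(u + b) / δ⌋ := (key _ 3).not.2 (by push_cast; linarith)
  have hm₁ : 1 ≤ ⌊(u + t + b) / δ⌋ := (key _ 1).2 (by push_cast; linarith)
  have hm₄ : ¬ 4 ≤ ⌊(u + t + b) / δ⌋ := (key _ 4).not.2 (by push_cast; linarith)
  have hn₁ : ¬ 1 ≤ ⌊(u + b) / δ⌋ ↔ u + b < δ := by simp [key]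
  have hm₂ : 2 ≤ ⌊(u + t + b) / δ⌋ ↔ 2 * δ ≤ u + t + b := by simpa using key _ 2
  rw [← hn₁, ← hm₂, Mismatch1, jb, jb]
  refine ⟨by omega, fun ⟨hn, hm⟩ => ?_⟩
  have hm₃ : ¬ 3 ≤ ⌊(u + t + b) / δ⌋ := (key _ 3).not.2 (by push_cast; linarith [hn₁.1 hn])
  omega

theorem setOf_mismatch1_inter_Ioc {δ t : ℝ} (hδ : 0 < δ) (ht₁ : δ < t) (ht₂ : t < 2 * δ)
    (u : ℝ) :
    {b | Mismatch1 δ b u (u + t)} ∩ Ioc (-u) (-u + 2 * δ) = Ico (2 * δ - t - u) (δ - u) := by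
  ext b
  simp only [mem_inter_iff, mem_ofPred_eq, mem_Ioc, mem_Ico]
  constructor
  · rintro ⟨h, hb₀, hb₁⟩
    have := (mismatch1_add_iff hδ ht₁ ht₂ (by linarith) (by linarith)).1 h
    constructor <;> linarith
  · rintro ⟨hb₀, hb₁⟩
    refine ⟨(mismatch1_add_iff hδ ht₁ ht₂ (by linarith) (by linarith)).2 ⟨?_, ?_⟩, ?_, ?_⟩ <;>
      linarith

theorem psiBar_add_eq {δ t : ℝ} (hδ : 0 < δ) (ht₁ : δ < t) (ht₂ : t < 2 * δ) (u : ℝ) :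
    psiBar δ u (u + t) = ENNReal.ofReal ((t - δ) / (2 * δ)) := by
  have hS := measurableSet_mismatch1 δ u (u + t)
  have hvol : volume ({b | Mismatch1 δ b u (u + t)} ∩ Ioc 0 (2 * δ)) = ENNReal.ofReal (t - δ) := by
    have := volume_inter_Ioc_eq_of_periodic (by positivity) hS
      (mismatch1_periodic hδ.ne' u (u + t)) 0 (-u)
    rw [zero_add] at this
    rw [this, setOf_mismatch1_inter_Ioc hδ ht₁ ht₂, Real.volume_Ico]
    ring_nf
  rw [psiBar, unifB_apply hS, hvol, ENNReal.ofReal_div_of_pos (by positivity), div_eq_mul_inv,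
    mul_comm]

/-- for `δ < |u - v| < 2δ`, the one-dimensional mismatch probability
equals `(|u - v| - δ)/(2δ)`. -/
theorem psiBar_eq_of_between (δ u v : ℝ) (hδ : 0 < δ)
    (h1 : δ < |u - v|) (h2 : |u - v| < 2 * δ) :
    psiBar δ u v = ENNReal.ofReal ((|u - v| - δ) / (2 * δ)) := by
  wlog huv : u ≤ v generalizing u v
  · have hsymm : psiBar δ u v = psiBar δ v u := by simp only [psiBar, mismatch1_comm]
    rw [abs_sub_comm] at h1 h2 ⊢
    rw [hsymm]
    exact this v u h1 h2 (le_of_not_ge huv)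
  rw [abs_sub_comm, abs_of_nonneg (sub_nonneg.2 huv)] at h1 h2 ⊢
  simpa using psiBar_add_eq hδ h1 h2 u

end
end
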